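/- arXiv:1607.07666 — 6 statements merged into one kernel-verified Lean document; each statement's English description precedes it below -/
import Mathlib

section
/- Any tripartite distribution of the form p(a₁,a₂,a₃|x₁,x₂,x₃) = Σ_λ p(a₁|x₁,λ) p(a₂|x₁,x₂,λ) p(a₃|x₁,x₃,λ) p(λ) (input broadcasting of x₁) can be rewritten as p(a₁,a₂,a₃|x₁,x₂,x₃) = Σ_μ p(a₁|x₁,μ) p(a₂|x₂,μ) p(a₃|x₃,μ) q(μ|x₁) for some finite variable μ and conditional weights q(μ|x₁) ≥ 0 with Σ_μ q(μ|x₁) = 1 for each x₁. -/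
/-- one direction of Lemma 2: input broadcasting of x₁ implies a
measurement-dependence model where the hidden variable depends on x₁. -/
theorem input_broadcasting_implies_measurement_dependence
    {A₁ A₂ A₃ X₁ X₂ X₃ Λ : Type}
    [Fintype A₁] [Fintype A₂] [Fintype A₃] [Fintype X₁] [Fintype X₂] [Fintype X₃] [Fintype Λ]
    (p : A₁ → A₂ → A₃ → X₁ → X₂ → X₃ → ℝ)
    (p₁ : A₁ → X₁ → Λ → ℝ) (p₂ : A₂ → X₁ → X₂ → Λ → ℝ) (p₃ : A₃ → X₁ → X₃ → Λ → ℝ)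
    (pΛ : Λ → ℝ)
    (hp₁0 : ∀ a₁ x₁ l, 0 ≤ p₁ a₁ x₁ l) (hp₁n : ∀ x₁ l, ∑ a₁, p₁ a₁ x₁ l = 1)
    (hp₂0 : ∀ a₂ x₁ x₂ l, 0 ≤ p₂ a₂ x₁ x₂ l) (hp₂n : ∀ x₁ x₂ l, ∑ a₂, p₂ a₂ x₁ x₂ l = 1)
    (hp₃0 : ∀ a₃ x₁ x₃ l, 0 ≤ p₃ a₃ x₁ x₃ l) (hp₃n : ∀ x₁ x₃ l, ∑ a₃, p₃ a₃ x₁ x₃ l = 1)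
    (hpΛ0 : ∀ l, 0 ≤ pΛ l) (hpΛn : ∑ l, pΛ l = 1)
    (hdec : ∀ a₁ a₂ a₃ x₁ x₂ x₃, p a₁ a₂ a₃ x₁ x₂ x₃ =
      ∑ l, p₁ a₁ x₁ l * p₂ a₂ x₁ x₂ l * p₃ a₃ x₁ x₃ l * pΛ l) :
    ∃ (n : ℕ) (q : Fin n → X₁ → ℝ)
      (q₁ : A₁ → X₁ → Fin n → ℝ) (q₂ : A₂ → X₂ → Fin n → ℝ) (q₃ : A₃ → X₃ → Fin n → ℝ),
      (∀ m x₁, 0 ≤ q m x₁) ∧ (∀ x₁, ∑ m, q m x₁ = 1) ∧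
      (∀ a₁ x₁ m, 0 ≤ q₁ a₁ x₁ m) ∧ (∀ x₁ m, ∑ a₁, q₁ a₁ x₁ m = 1) ∧
      (∀ a₂ x₂ m, 0 ≤ q₂ a₂ x₂ m) ∧ (∀ x₂ m, ∑ a₂, q₂ a₂ x₂ m = 1) ∧
      (∀ a₃ x₃ m, 0 ≤ q₃ a₃ x₃ m) ∧ (∀ x₃ m, ∑ a₃, q₃ a₃ x₃ m = 1) ∧
      (∀ a₁ a₂ a₃ x₁ x₂ x₃, p a₁ a₂ a₃ x₁ x₂ x₃ =
        ∑ m, q₁ a₁ x₁ m * q₂ a₂ x₂ m * q₃ a₃ x₃ m * q m x₁) := by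

  classical
  obtain ⟨e⟩ := Fintype.truncEquivFin (Λ × X₁)
  refine ⟨Fintype.card (Λ × X₁),
    fun m x₁ => if (e.symm m).2 = x₁ then pΛ (e.symm m).1 else 0,
    fun a₁ x₁ m => p₁ a₁ x₁ (e.symm m).1,
    fun a₂ x₂ m => p₂ a₂ (e.symm m).2 x₂ (e.symm m).1,
    fun a₃ x₃ m => p₃ a₃ (e.symm m).2 x₃ (e.symm m).1,
    ?_, ?_, ?_, ?_, ?_, ?_, ?_, ?_, ?_⟩
  · intro m x₁; dsimp only; split <;> simp [hpΛ0]
  · intro x₁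
    dsimp only
    rw [Fintype.sum_bijective e.symm e.symm.bijective
      (fun m => if (e.symm m).2 = x₁ then pΛ (e.symm m).1 else 0)
      (fun p : Λ × X₁ => if p.2 = x₁ then pΛ p.1 else 0) (fun m => rfl)]
    rw [Fintype.sum_prod_type_right]
    simpa using hpΛn
  · intro a₁ x₁ m; exact hp₁0 _ _ _
  · intro x₁ m; exact hp₁n _ _
  · intro a₂ x₂ m; exact hp₂0 _ _ _ _
  · intro x₂ m; exact hp₂n _ _ _
  · intro a₃ x₃ m; exact hp₃0 _ _ _ _
  · intro x₃ m; exact hp₃n _ _ _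
  · intro a₁ a₂ a₃ x₁ x₂ x₃
    rw [hdec]
    dsimp only
    rw [Fintype.sum_bijective e.symm e.symm.bijective
      (fun m => p₁ a₁ x₁ (e.symm m).1 * p₂ a₂ (e.symm m).2 x₂ (e.symm m).1 *
        p₃ a₃ (e.symm m).2 x₃ (e.symm m).1 *
        (if (e.symm m).2 = x₁ then pΛ (e.symm m).1 else 0))
      (fun q : Λ × X₁ => p₁ a₁ x₁ q.1 * p₂ a₂ q.2 x₂ q.1 * p₃ a₃ q.2 x₃ q.1 *
        (if q.2 = x₁ then pΛ q.1 else 0)) (fun m => rfl)]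
    rw [Fintype.sum_prod_type_right, Finset.sum_comm]
    refine Finset.sum_congr rfl fun l _ => ?_
    have key : ∀ y : X₁,
        p₁ a₁ x₁ (l, y).1 * p₂ a₂ (l, y).2 x₂ (l, y).1 * p₃ a₃ (l, y).2 x₃ (l, y).1 *
          (if (l, y).2 = x₁ then pΛ (l, y).1 else 0)
        = if y = x₁ then p₁ a₁ x₁ l * p₂ a₂ x₁ x₂ l * p₃ a₃ x₁ x₃ l * pΛ l else 0 := by
      intro y; by_cases h : y = x₁ <;> simp [h]
    rw [Finset.sum_congr rfl fun y _ => key y, Finset.sum_ite_eq' Finset.univ x₁]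
    simp
end

section
/- If a tripartite distribution has the form p(a₁,a₂,a₃|x₁,x₂,x₃) = Σ_λ p(λ) p(a₁|x₁,x₃,λ) p(a₂|x₂,x₃,λ) p(a₃|x₁,x₂,x₃,λ) where x₃ is distributed according to some fixed distribution q(x₃) independent of λ, then the marginal distribution over parties 1 and 2, p(a₁,a₂|x₁,x₂) := Σ_{a₃} Σ_{x₃} q(x₃) p(a₁,a₂,a₃|x₁,x₂,x₃), admits a bipartite local hidden variable decomposition p(a₁,a₂|x₁,x₂) = Σ_{λ'} p(λ') p(a₁|x₁,λ') p(a₂|x₂,λ'). -/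
/-- the causal class {(1,3),(2,3),(1,2,3)} has LHV marginals over the
first two parties: averaging the third input x₃ over a fixed distribution q(x₃)
and summing over a₃ gives a bipartite LHV model (with λ' = (x₃,λ)). -/
theorem class_133_has_LHV_marginal_on_first_two_parties
    {A₁ A₂ A₃ X₁ X₂ X₃ Λ : Type}
    [Fintype A₁] [Fintype A₂] [Fintype A₃] [Fintype X₁] [Fintype X₂] [Fintype X₃] [Fintype Λ]
    (p : A₁ → A₂ → A₃ → X₁ → X₂ → X₃ → ℝ)
    (pΛ : Λ → ℝ)
    (p₁ : A₁ → X₁ → X₃ → Λ → ℝ) (p₂ : A₂ → X₂ → X₃ → Λ → ℝ)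
    (p₃ : A₃ → X₁ → X₂ → X₃ → Λ → ℝ)
    (q : X₃ → ℝ)
    (hpΛ0 : ∀ l, 0 ≤ pΛ l) (hpΛn : ∑ l, pΛ l = 1)
    (hp₁0 : ∀ a₁ x₁ x₃ l, 0 ≤ p₁ a₁ x₁ x₃ l) (hp₁n : ∀ x₁ x₃ l, ∑ a₁, p₁ a₁ x₁ x₃ l = 1)
    (hp₂0 : ∀ a₂ x₂ x₃ l, 0 ≤ p₂ a₂ x₂ x₃ l) (hp₂n : ∀ x₂ x₃ l, ∑ a₂, p₂ a₂ x₂ x₃ l = 1)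
    (hp₃0 : ∀ a₃ x₁ x₂ x₃ l, 0 ≤ p₃ a₃ x₁ x₂ x₃ l)
    (hp₃n : ∀ x₁ x₂ x₃ l, ∑ a₃, p₃ a₃ x₁ x₂ x₃ l = 1)
    (hq0 : ∀ x₃, 0 ≤ q x₃) (hqn : ∑ x₃, q x₃ = 1)
    (hdec : ∀ a₁ a₂ a₃ x₁ x₂ x₃, p a₁ a₂ a₃ x₁ x₂ x₃ =
      ∑ l, pΛ l * p₁ a₁ x₁ x₃ l * p₂ a₂ x₂ x₃ l * p₃ a₃ x₁ x₂ x₃ l) :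
    ∃ (n : ℕ) (w : Fin n → ℝ) (r₁ : A₁ → X₁ → Fin n → ℝ) (r₂ : A₂ → X₂ → Fin n → ℝ),
      (∀ l', 0 ≤ w l') ∧ (∑ l', w l' = 1) ∧
      (∀ a₁ x₁ l', 0 ≤ r₁ a₁ x₁ l') ∧ (∀ x₁ l', ∑ a₁, r₁ a₁ x₁ l' = 1) ∧
      (∀ a₂ x₂ l', 0 ≤ r₂ a₂ x₂ l') ∧ (∀ x₂ l', ∑ a₂, r₂ a₂ x₂ l' = 1) ∧
      (∀ a₁ a₂ x₁ x₂,
        (∑ a₃, ∑ x₃, q x₃ * p a₁ a₂ a₃ x₁ x₂ x₃) =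
          ∑ l', w l' * r₁ a₁ x₁ l' * r₂ a₂ x₂ l') := by

  classical
  obtain ⟨e⟩ := Fintype.truncEquivFin (X₃ × Λ)
  refine ⟨Fintype.card (X₃ × Λ), fun l' => q (e.symm l').1 * pΛ (e.symm l').2,
    fun a₁ x₁ l' => p₁ a₁ x₁ (e.symm l').1 (e.symm l').2,
    fun a₂ x₂ l' => p₂ a₂ x₂ (e.symm l').1 (e.symm l').2, ?_, ?_, ?_, ?_, ?_, ?_, ?_⟩
  · exact fun l' => mul_nonneg (hq0 _) (hpΛ0 _)
  · rw [e.symm.sum_comp (fun z => q z.1 * pΛ z.2)]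
    rw [Fintype.sum_prod_type, ← Finset.sum_mul_sum, hqn, hpΛn, one_mul]
  · exact fun a₁ x₁ l' => hp₁0 _ _ _ _
  · exact fun x₁ l' => hp₁n _ _ _
  · exact fun a₂ x₂ l' => hp₂0 _ _ _ _
  · exact fun x₂ l' => hp₂n _ _ _
  · intro a₁ a₂ x₁ x₂
    rw [e.symm.sum_comp (fun z => q z.1 * pΛ z.2 * p₁ a₁ x₁ z.1 z.2 * p₂ a₂ x₂ z.1 z.2)]
    rw [Fintype.sum_prod_type]
    rw [Finset.sum_comm]
    refine Finset.sum_congr rfl fun x₃ _ => ?_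
    simp_rw [hdec, Finset.mul_sum]
    rw [Finset.sum_comm]
    refine Finset.sum_congr rfl fun l _ => ?_
    have h : ∀ a₃, q x₃ * (pΛ l * p₁ a₁ x₁ x₃ l * p₂ a₂ x₂ x₃ l * p₃ a₃ x₁ x₂ x₃ l)
        = (q x₃ * pΛ l * p₁ a₁ x₁ x₃ l * p₂ a₂ x₂ x₃ l) * p₃ a₃ x₁ x₂ x₃ l := fun a₃ => by ring
    rw [Finset.sum_congr rfl (fun a₃ _ => h a₃), ← Finset.mul_sum, hp₃n, mul_one]
end

section
/- For any distribution of the form p(a₁,a₂,a₃|x₁,x₂,x₃) = Σ_λ p(λ) p(a₁|x₁,λ) p(a₂|x₂,λ) p(a₃|x₃,λ) with binary inputs x_i ∈ {0,1} and ±1-valued outputs, the Svetlichny-type expression −⟨A₀B₀C₀⟩+⟨A₀B₀C₁⟩+⟨A₀B₁C₀⟩+⟨A₀B₁C₁⟩+⟨A₁B₀C₀⟩+⟨A₁B₀C₁⟩+⟨A₁B₁C₀⟩−⟨A₁B₁C₁⟩ is at most 4, where ⟨A_x B_y C_z⟩ := Σ_{a,b,c ∈ {±1}} a·b·c · p(a,b,c|x,y,z).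 -/
/-- Sign of a bit: `false ↦ +1`, `true ↦ −1`. -/
noncomputable def sgn (b : Bool) : ℝ := if b then -1 else 1

/-- Three-party full correlator ⟨A_x B_y C_z⟩ for ±1-valued outputs encoded by bits. -/
noncomputable def corr3 (p : Bool → Bool → Bool → Bool → Bool → Bool → ℝ)
    (x y z : Bool) : ℝ :=
  ∑ a, ∑ b, ∑ c, sgn a * sgn b * sgn c * p a b c x y z

lemma svet_pointwise (a0 a1 b0 b1 c0 c1 : ℝ)
    (ha0 : |a0| ≤ 1) (ha1 : |a1| ≤ 1) (hb0 : |b0| ≤ 1) (hb1 : |b1| ≤ 1)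
    (hc0 : |c0| ≤ 1) (hc1 : |c1| ≤ 1) :
    -(a0*b0*c0) + a0*b0*c1 + a0*b1*c0 + a0*b1*c1
      + a1*b0*c0 + a1*b0*c1 + a1*b1*c0 - a1*b1*c1 ≤ 4 := by
  rw [abs_le] at ha0 ha1 hb0 hb1 hc0 hc1
  obtain ⟨ha0l, ha0u⟩ := ha0
  obtain ⟨ha1l, ha1u⟩ := ha1
  obtain ⟨hb0l, hb0u⟩ := hb0
  obtain ⟨hb1l, hb1u⟩ := hb1
  obtain ⟨hc0l, hc0u⟩ := hc0
  obtain ⟨hc1l, hc1u⟩ := hc1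
  -- u = a0*b0 - a1*b1, v = a0*b1 + a1*b0, S = (c1-c0)*u + (c0+c1)*v
  have hu1 : a0*b0 - a1*b1 ≤ 2 := by
    nlinarith [mul_nonneg (by linarith : (0:ℝ) ≤ 1 - a0) (by linarith : (0:ℝ) ≤ 1 - b0),
      mul_nonneg (by linarith : (0:ℝ) ≤ 1 + a1) (by linarith : (0:ℝ) ≤ 1 - b1)]
  have hu2 : -2 ≤ a0*b0 - a1*b1 := by
    nlinarith [mul_nonneg (by linarith : (0:ℝ) ≤ 1 + a0) (by linarith : (0:ℝ) ≤ 1 - b0),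
      mul_nonneg (by linarith : (0:ℝ) ≤ 1 - a1) (by linarith : (0:ℝ) ≤ 1 - b1)]
  have hv1 : a0*b1 + a1*b0 ≤ 2 := by
    nlinarith [mul_nonneg (by linarith : (0:ℝ) ≤ 1 - a0) (by linarith : (0:ℝ) ≤ 1 - b1),
      mul_nonneg (by linarith : (0:ℝ) ≤ 1 - a1) (by linarith : (0:ℝ) ≤ 1 - b0)]
  have hv2 : -2 ≤ a0*b1 + a1*b0 := by
    nlinarith [mul_nonneg (by linarith : (0:ℝ) ≤ 1 + a0) (by linarith : (0:ℝ) ≤ 1 - b1),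
      mul_nonneg (by linarith : (0:ℝ) ≤ 1 + a1) (by linarith : (0:ℝ) ≤ 1 - b0)]
  rcases le_total c0 c1 with h | h
  · rcases le_total (-c0) c1 with h' | h'
    · nlinarith [mul_nonneg (by linarith : (0:ℝ) ≤ c1 - c0) (by linarith : (0:ℝ) ≤ 2 - (a0*b0 - a1*b1)),
        mul_nonneg (by linarith : (0:ℝ) ≤ c0 + c1) (by linarith : (0:ℝ) ≤ 2 - (a0*b1 + a1*b0))]
    · nlinarith [mul_nonneg (by linarith : (0:ℝ) ≤ c1 - c0) (by linarith : (0:ℝ) ≤ 2 - (a0*b0 - a1*b1)),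
        mul_nonneg (by linarith : (0:ℝ) ≤ -(c0 + c1)) (by linarith : (0:ℝ) ≤ 2 + (a0*b1 + a1*b0))]
  · rcases le_total (-c0) c1 with h' | h'
    · nlinarith [mul_nonneg (by linarith : (0:ℝ) ≤ c0 - c1) (by linarith : (0:ℝ) ≤ 2 + (a0*b0 - a1*b1)),
        mul_nonneg (by linarith : (0:ℝ) ≤ c0 + c1) (by linarith : (0:ℝ) ≤ 2 - (a0*b1 + a1*b0))]
    · nlinarith [mul_nonneg (by linarith : (0:ℝ) ≤ c0 - c1) (by linarith : (0:ℝ) ≤ 2 + (a0*b0 - a1*b1)),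
        mul_nonneg (by linarith : (0:ℝ) ≤ -(c0 + c1)) (by linarith : (0:ℝ) ≤ 2 + (a0*b1 + a1*b0))]

/-- any tripartite local hidden-variable model with binary inputs and
±1-valued outputs satisfies the Svetlichny expression bound 4. -/
theorem svetlichny_bound_for_LHV
    {Λ : Type} [Fintype Λ]
    (p : Bool → Bool → Bool → Bool → Bool → Bool → ℝ)
    (w : Λ → ℝ)
    (pa pb pc : Bool → Bool → Λ → ℝ)
    (hw0 : ∀ l, 0 ≤ w l) (hwn : ∑ l, w l = 1)
    (hpa0 : ∀ a x l, 0 ≤ pa a x l) (hpan : ∀ x l, ∑ a, pa a x l = 1)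
    (hpb0 : ∀ b y l, 0 ≤ pb b y l) (hpbn : ∀ y l, ∑ b, pb b y l = 1)
    (hpc0 : ∀ c z l, 0 ≤ pc c z l) (hpcn : ∀ z l, ∑ c, pc c z l = 1)
    (hdec : ∀ a b c x y z, p a b c x y z = ∑ l, w l * pa a x l * pb b y l * pc c z l) :
    -corr3 p false false false + corr3 p false false true
      + corr3 p false true false + corr3 p false true true
      + corr3 p true false false + corr3 p true false true
      + corr3 p true true false - corr3 p true true true ≤ 4 := by
  set A : Bool → Λ → ℝ := fun x l => pa false x l - pa true x l with hA
  set B : Bool → Λ → ℝ := fun y l => pb false y l - pb true y l with hB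
  set C : Bool → Λ → ℝ := fun z l => pc false z l - pc true z l with hC
  have hAb : ∀ x l, |A x l| ≤ 1 := by
    intro x l
    have h := hpan x l
    rw [Fintype.sum_bool] at h
    rw [abs_le]
    constructor <;> simp only [hA] <;>
      nlinarith [hpa0 false x l, hpa0 true x l]
  have hBb : ∀ y l, |B y l| ≤ 1 := by
    intro y l
    have h := hpbn y l
    rw [Fintype.sum_bool] at h
    rw [abs_le]
    constructor <;> simp only [hB] <;>
      nlinarith [hpb0 false y l, hpb0 true y l]
  have hCb : ∀ z l, |C z l| ≤ 1 := by
    intro z l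
    have h := hpcn z l
    rw [Fintype.sum_bool] at h
    rw [abs_le]
    constructor <;> simp only [hC] <;>
      nlinarith [hpc0 false z l, hpc0 true z l]
  have hcorr : ∀ x y z, corr3 p x y z = ∑ l, w l * (A x l * B y l * C z l) := by
    intro x y z
    simp only [corr3, hdec, Fintype.sum_bool, Finset.mul_sum, ← Finset.sum_add_distrib]
    apply Finset.sum_congr rfl
    intro l _
    simp only [sgn, hA, hB, hC]
    norm_num
    ring
  have key : (∑ l, (-(w l * (A false l * B false l * C false l))
        + w l * (A false l * B false l * C true l)
        + w l * (A false l * B true l * C false l) + w l * (A false l * B true l * C true l)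
        + w l * (A true l * B false l * C false l) + w l * (A true l * B false l * C true l)
        + w l * (A true l * B true l * C false l) - w l * (A true l * B true l * C true l)))
      = -(∑ l, w l * (A false l * B false l * C false l))
        + (∑ l, w l * (A false l * B false l * C true l))
        + (∑ l, w l * (A false l * B true l * C false l))
        + (∑ l, w l * (A false l * B true l * C true l))
        + (∑ l, w l * (A true l * B false l * C false l))
        + (∑ l, w l * (A true l * B false l * C true l))
        + (∑ l, w l * (A true l * B true l * C false l))
        - (∑ l, w l * (A true l * B true l * C true l)) := by
    simp only [Finset.sum_add_distrib, Finset.sum_sub_distrib, Finset.sum_neg_distrib]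
  rw [hcorr, hcorr, hcorr, hcorr, hcorr, hcorr, hcorr, hcorr, ← key]
  calc (∑ l, (-(w l * (A false l * B false l * C false l))
        + w l * (A false l * B false l * C true l)
        + w l * (A false l * B true l * C false l) + w l * (A false l * B true l * C true l)
        + w l * (A true l * B false l * C false l) + w l * (A true l * B false l * C true l)
        + w l * (A true l * B true l * C false l) - w l * (A true l * B true l * C true l)))
      ≤ ∑ l, w l * 4 := by
        apply Finset.sum_le_sum
        intro l _
        have key2 := svet_pointwise (A false l) (A true l) (B false l) (B true l)
          (C false l) (C true l) (hAb false l) (hAb true l) (hBb false l) (hBb true l)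
          (hCb false l) (hCb true l)
        nlinarith [hw0 l, key2]
    _ = 4 := by rw [← Finset.sum_mul, hwn, one_mul]
end

section
/- Any tripartite distribution of the form p(a₁,a₂,a₃|x₁,x₂,x₃) = Σ_λ p(λ) p(a₁|x₁,x₃,λ) p(a₂|x₁,x₂,λ) p(a₃|x₂,x₃,λ) (the 'circle' class, where each input is additionally communicated to one neighbour) with binary inputs and ±1 outputs satisfies ⟨A₀B₀C₀⟩+⟨A₀B₀C₁⟩+⟨A₀B₁C₀⟩+⟨A₀B₁C₁⟩+⟨A₁B₀C₀⟩+⟨A₁B₀C₁⟩+⟨A₁B₁C₀⟩−⟨A₁B₁C₁⟩ ≤ 6. -/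
/-- `c * X ≤ |X|` when `|c| ≤ 1`. -/
lemma circle_mla (c X : ℝ) (h : |c| ≤ 1) : c * X ≤ |X| := by
  calc c * X ≤ |c * X| := le_abs_self _
    _ = |c| * |X| := abs_mul _ _
    _ ≤ 1 * |X| := by have := abs_nonneg X; nlinarith
    _ = |X| := one_mul _

/-- `|x+y| + |x-y| ≤ 2` on the unit box. -/
lemma circle_hop (x y : ℝ) (hx : |x| ≤ 1) (hy : |y| ≤ 1) : |x + y| + |x - y| ≤ 2 := by
  rcases abs_cases (x+y) with ⟨h1,_⟩|⟨h1,_⟩ <;> rcases abs_cases (x-y) with ⟨h2,_⟩|⟨h2,_⟩ <;>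
    rw [h1, h2] <;> rcases abs_le.mp hx with ⟨_,_⟩ <;> rcases abs_le.mp hy with ⟨_,_⟩ <;> linarith

lemma circle_absS (b00 b01 b10 b11 c00 c01 c10 c11 : ℝ)
    (hb00 : |b00| ≤ 1) (hb01 : |b01| ≤ 1) (hb10 : |b10| ≤ 1) (hb11 : |b11| ≤ 1)
    (hc00 : |c00| ≤ 1) (hc01 : |c01| ≤ 1) (hc10 : |c10| ≤ 1) (hc11 : |c11| ≤ 1) :
    |b00*c00 + b01*c10| + |b00*c01 + b01*c11| + |b10*c00 + b11*c10| + |b10*c01 - b11*c11| ≤ 6 := by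
  have hc00' : |(-c00)| ≤ 1 := by rwa [abs_neg]
  have hc01' : |(-c01)| ≤ 1 := by rwa [abs_neg]
  have hc10' : |(-c10)| ≤ 1 := by rwa [abs_neg]
  have hc11' : |(-c11)| ≤ 1 := by rwa [abs_neg]
  have e1 : |b00 + b10| ≤ 2 := (abs_add_le _ _).trans (by linarith [abs_le.mp hb00, abs_le.mp hb10])
  have e2 : |b00 - b10| ≤ 2 := (abs_sub _ _).trans (by linarith [abs_le.mp hb00, abs_le.mp hb10])
  have e3 : |b01 + b11| ≤ 2 := (abs_add_le _ _).trans (by linarith [abs_le.mp hb01, abs_le.mp hb11])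
  have e4 : |b01 - b11| ≤ 2 := (abs_sub _ _).trans (by linarith [abs_le.mp hb01, abs_le.mp hb11])
  have h1 := circle_hop b00 b10 hb00 hb10
  have h2 := circle_hop b01 b11 hb01 hb11
  rcases abs_cases (b00*c00 + b01*c10) with ⟨g1,_⟩|⟨g1,_⟩ <;>
  rcases abs_cases (b00*c01 + b01*c11) with ⟨g2,_⟩|⟨g2,_⟩ <;>
  rcases abs_cases (b10*c00 + b11*c10) with ⟨g3,_⟩|⟨g3,_⟩ <;>
  rcases abs_cases (b10*c01 - b11*c11) with ⟨g4,_⟩|⟨g4,_⟩ <;>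
  rw [g1, g2, g3, g4] <;>
  linarith [circle_mla c00 (b00+b10) hc00, circle_mla (-c00) (b00+b10) hc00',
    circle_mla c00 (b00-b10) hc00, circle_mla (-c00) (b00-b10) hc00',
    circle_mla c01 (b00+b10) hc01, circle_mla (-c01) (b00+b10) hc01',
    circle_mla c01 (b00-b10) hc01, circle_mla (-c01) (b00-b10) hc01',
    circle_mla c10 (b01+b11) hc10, circle_mla (-c10) (b01+b11) hc10',
    circle_mla c10 (b01-b11) hc10, circle_mla (-c10) (b01-b11) hc10',
    circle_mla c11 (b01+b11) hc11, circle_mla (-c11) (b01+b11) hc11',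
    circle_mla c11 (b01-b11) hc11, circle_mla (-c11) (b01-b11) hc11']

lemma circle_key (a00 a01 a10 a11 b00 b01 b10 b11 c00 c01 c10 c11 : ℝ)
    (ha00 : |a00| ≤ 1) (ha01 : |a01| ≤ 1) (ha10 : |a10| ≤ 1) (ha11 : |a11| ≤ 1)
    (hb00 : |b00| ≤ 1) (hb01 : |b01| ≤ 1) (hb10 : |b10| ≤ 1) (hb11 : |b11| ≤ 1)
    (hc00 : |c00| ≤ 1) (hc01 : |c01| ≤ 1) (hc10 : |c10| ≤ 1) (hc11 : |c11| ≤ 1) :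
    a00*(b00*c00) + a01*(b00*c01) + a00*(b01*c10) + a01*(b01*c11)
      + a10*(b10*c00) + a11*(b10*c01) + a10*(b11*c10) - a11*(b11*c11) ≤ 6 := by
  have k1 := circle_mla a00 (b00*c00 + b01*c10) ha00
  have k2 := circle_mla a01 (b00*c01 + b01*c11) ha01
  have k3 := circle_mla a10 (b10*c00 + b11*c10) ha10
  have k4 := circle_mla a11 (b10*c01 - b11*c11) ha11
  have k5 := circle_absS b00 b01 b10 b11 c00 c01 c10 c11 hb00 hb01 hb10 hb11 hc00 hc01 hc10 hc11
  nlinarith [k1, k2, k3, k4, k5]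

/-- inequality (12) of the paper: any distribution in the 'circle' class
{(1,3),(1,2),(2,3)} with binary inputs and ±1 outputs satisfies the stated
full-correlator inequality with bound 6. -/
theorem circle_class_inequality
    {Λ : Type} [Fintype Λ]
    (p : Bool → Bool → Bool → Bool → Bool → Bool → ℝ)
    (w : Λ → ℝ)
    (p₁ : Bool → Bool → Bool → Λ → ℝ)   -- p(a₁|x₁,x₃,λ)
    (p₂ : Bool → Bool → Bool → Λ → ℝ)   -- p(a₂|x₁,x₂,λ)
    (p₃ : Bool → Bool → Bool → Λ → ℝ)   -- p(a₃|x₂,x₃,λ)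
    (hw0 : ∀ l, 0 ≤ w l) (hwn : ∑ l, w l = 1)
    (hp₁0 : ∀ a₁ x₁ x₃ l, 0 ≤ p₁ a₁ x₁ x₃ l) (hp₁n : ∀ x₁ x₃ l, ∑ a₁, p₁ a₁ x₁ x₃ l = 1)
    (hp₂0 : ∀ a₂ x₁ x₂ l, 0 ≤ p₂ a₂ x₁ x₂ l) (hp₂n : ∀ x₁ x₂ l, ∑ a₂, p₂ a₂ x₁ x₂ l = 1)
    (hp₃0 : ∀ a₃ x₂ x₃ l, 0 ≤ p₃ a₃ x₂ x₃ l) (hp₃n : ∀ x₂ x₃ l, ∑ a₃, p₃ a₃ x₂ x₃ l = 1)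
    (hdec : ∀ a₁ a₂ a₃ x₁ x₂ x₃, p a₁ a₂ a₃ x₁ x₂ x₃ =
      ∑ l, w l * p₁ a₁ x₁ x₃ l * p₂ a₂ x₁ x₂ l * p₃ a₃ x₂ x₃ l) :
    corr3 p false false false + corr3 p false false true
      + corr3 p false true false + corr3 p false true true
      + corr3 p true false false + corr3 p true false true
      + corr3 p true true false - corr3 p true true true ≤ 6 := by
  set D1 : Bool → Bool → Λ → ℝ := fun x z l => p₁ false x z l - p₁ true x z l with hD1
  set D2 : Bool → Bool → Λ → ℝ := fun x y l => p₂ false x y l - p₂ true x y l with hD2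
  set D3 : Bool → Bool → Λ → ℝ := fun y z l => p₃ false y z l - p₃ true y z l with hD3
  have hcorr : ∀ x y z, corr3 p x y z = ∑ l, w l * (D1 x z l * (D2 x y l * D3 y z l)) := by
    intro x y z
    simp only [corr3, hdec, sgn, Fintype.sum_bool, if_true, if_false, Bool.false_eq_true,
      neg_mul, one_mul, mul_one, neg_neg, ← Finset.sum_add_distrib, ← Finset.sum_sub_distrib,
      ← Finset.sum_neg_distrib, hD1, hD2, hD3]
    exact Finset.sum_congr rfl fun l _ => by ring
  have hD1b : ∀ x z l, |D1 x z l| ≤ 1 := by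
    intro x z l
    have h := hp₁n x z l; rw [Fintype.sum_bool] at h
    have h0 := hp₁0 false x z l; have h1 := hp₁0 true x z l
    exact abs_le.mpr ⟨by simp only [hD1]; linarith, by simp only [hD1]; linarith⟩
  have hD2b : ∀ x y l, |D2 x y l| ≤ 1 := by
    intro x y l
    have h := hp₂n x y l; rw [Fintype.sum_bool] at h
    have h0 := hp₂0 false x y l; have h1 := hp₂0 true x y l
    exact abs_le.mpr ⟨by simp only [hD2]; linarith, by simp only [hD2]; linarith⟩
  have hD3b : ∀ y z l, |D3 y z l| ≤ 1 := by
    intro y z l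
    have h := hp₃n y z l; rw [Fintype.sum_bool] at h
    have h0 := hp₃0 false y z l; have h1 := hp₃0 true y z l
    exact abs_le.mpr ⟨by simp only [hD3]; linarith, by simp only [hD3]; linarith⟩
  have htot : corr3 p false false false + corr3 p false false true
      + corr3 p false true false + corr3 p false true true
      + corr3 p true false false + corr3 p true false true
      + corr3 p true true false - corr3 p true true true
      = ∑ l, w l * (D1 false false l * (D2 false false l * D3 false false l)
          + D1 false true l * (D2 false false l * D3 false true l)
          + D1 false false l * (D2 false true l * D3 true false l)
          + D1 false true l * (D2 false true l * D3 true true l)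
          + D1 true false l * (D2 true false l * D3 false false l)
          + D1 true true l * (D2 true false l * D3 false true l)
          + D1 true false l * (D2 true true l * D3 true false l)
          - D1 true true l * (D2 true true l * D3 true true l)) := by
    simp only [hcorr, ← Finset.sum_add_distrib, ← Finset.sum_sub_distrib]
    exact Finset.sum_congr rfl fun l _ => by ring
  rw [htot]
  have hbound : ∀ l ∈ Finset.univ, w l * (D1 false false l * (D2 false false l * D3 false false l)
          + D1 false true l * (D2 false false l * D3 false true l)
          + D1 false false l * (D2 false true l * D3 true false l)
          + D1 false true l * (D2 false true l * D3 true true l)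
          + D1 true false l * (D2 true false l * D3 false false l)
          + D1 true true l * (D2 true false l * D3 false true l)
          + D1 true false l * (D2 true true l * D3 true false l)
          - D1 true true l * (D2 true true l * D3 true true l)) ≤ w l * 6 := by
    intro l _
    refine mul_le_mul_of_nonneg_left ?_ (hw0 l)
    have := circle_key (D1 false false l) (D1 false true l) (D1 true false l) (D1 true true l)
      (D2 false false l) (D2 false true l) (D2 true false l) (D2 true true l)
      (D3 false false l) (D3 false true l) (D3 true false l) (D3 true true l)
      (hD1b _ _ _) (hD1b _ _ _) (hD1b _ _ _) (hD1b _ _ _)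
      (hD2b _ _ _) (hD2b _ _ _) (hD2b _ _ _) (hD2b _ _ _)
      (hD3b _ _ _) (hD3b _ _ _) (hD3b _ _ _) (hD3b _ _ _)
    linarith
  calc (∑ l, w l * (D1 false false l * (D2 false false l * D3 false false l)
          + D1 false true l * (D2 false false l * D3 false true l)
          + D1 false false l * (D2 false true l * D3 true false l)
          + D1 false true l * (D2 false true l * D3 true true l)
          + D1 true false l * (D2 true false l * D3 false false l)
          + D1 true true l * (D2 true false l * D3 false true l)
          + D1 true false l * (D2 true true l * D3 true false l)
          - D1 true true l * (D2 true true l * D3 true true l)))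
      ≤ ∑ l, w l * 6 := Finset.sum_le_sum hbound
    _ = 6 := by rw [← Finset.sum_mul, hwn, one_mul]
end

section
/- Taking I₂ to be the CHSH expression CHSH(A,B) = ⟨A₀B₀⟩+⟨A₀B₁⟩+⟨A₁B₀⟩−⟨A₁B₁⟩ with local bound 2 and nonsignaling bound 4, the product distribution of three PR boxes p_PR(a,b|x,y) = (1/2)δ[a ⊕ b = x·y] distributed as p(a₁,a₁′,a₂,a₂′,a₃,a₃′|x₁,x₂,x₃) = p_PR(a₁,a₂|x₁,x₂)·p_PR(a₁′,a₃|x₁,x₃)·p_PR(a₂′,a₃′|x₂,x₃) achieves I₃ = CHSH(A,B)+CHSH(A′,C)+CHSH(B′,C′) = 12, exceeding the bound 10 = 2 + 2·4. -/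
/-- The PR box p_PR(a,b|x,y) = (1/2)δ[a⊕b = x·y]. -/
noncomputable def pPR (a b x y : Bool) : ℝ := if xor a b = (x && y) then 1/2 else 0

/-- Three PR boxes distributed pairwise among three parties, each party outputting
two bits: p(a₁,a₁′,a₂,a₂′,a₃,a₃′|x₁,x₂,x₃) = p_PR(a₁,a₂|x₁,x₂)·p_PR(a₁′,a₃|x₁,x₃)·p_PR(a₂′,a₃′|x₂,x₃). -/
noncomputable def tripleBox (a₁ a₁' a₂ a₂' a₃ a₃' x₁ x₂ x₃ : Bool) : ℝ :=
  pPR a₁ a₂ x₁ x₂ * pPR a₁' a₃ x₁ x₃ * pPR a₂' a₃' x₂ x₃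

/-- Correlator ⟨A_x B_y⟩ of the first bits of parties 1 and 2 (third input arbitrary
by nonsignaling; we fix it to `false`). -/
noncomputable def corrAB (x y : Bool) : ℝ :=
  ∑ a₁, ∑ a₁', ∑ a₂, ∑ a₂', ∑ a₃, ∑ a₃',
    sgn a₁ * sgn a₂ * tripleBox a₁ a₁' a₂ a₂' a₃ a₃' x y false

/-- Correlator ⟨A′_x C_z⟩ of the second bit of party 1 and first bit of party 3. -/
noncomputable def corrA'C (x z : Bool) : ℝ :=
  ∑ a₁, ∑ a₁', ∑ a₂, ∑ a₂', ∑ a₃, ∑ a₃',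
    sgn a₁' * sgn a₃ * tripleBox a₁ a₁' a₂ a₂' a₃ a₃' x false z

/-- Correlator ⟨B′_y C′_z⟩ of the second bits of parties 2 and 3. -/
noncomputable def corrB'C' (y z : Bool) : ℝ :=
  ∑ a₁, ∑ a₁', ∑ a₂, ∑ a₂', ∑ a₃, ∑ a₃',
    sgn a₂' * sgn a₃' * tripleBox a₁ a₁' a₂ a₂' a₃ a₃' false y z

/-- three PR boxes achieve
I₃ = CHSH(A,B)+CHSH(A′,C)+CHSH(B′,C′) = 12 > 10 = 2 + 2·4. -/
theorem three_PR_boxes_violate_I3 :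
    (corrAB false false + corrAB false true + corrAB true false - corrAB true true)
      + (corrA'C false false + corrA'C false true + corrA'C true false - corrA'C true true)
      + (corrB'C' false false + corrB'C' false true + corrB'C' true false
          - corrB'C' true true) = 12
    ∧ ((2 : ℝ) + 2 * 4 = 10) ∧ ((12 : ℝ) > 10) := by
  refine ⟨?_, by norm_num, by norm_num⟩
  simp only [corrAB, corrA'C, corrB'C', tripleBox, pPR, sgn, Fintype.sum_bool]
  norm_num
end

section
/- Every distribution compatible with the star class {(1),(2),(1,2,3)} — i.e., p(a₁,a₂,a₃|x₁,x₂,x₃) = Σ_λ p(λ) p(a₁|x₁,λ) p(a₂|x₂,λ) p(a₃|x₁,x₂,x₃,λ) — is also compatible with the class {(1,3),(2,3),(1,2,3)}; conversely, every nonsignaling distribution of the form p(a₁,a₂,a₃|x₁,x₂,x₃) = r(a₁,a₂|x₁,x₂) · s(a₃|a₁,a₂,x₁,x₂,x₃), where r is a bipartite LHV distribution and s is an arbitrary conditional distribution, is compatible with the star class {(1),(2),(1,2,3)}. -/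
private lemma det_sum {X A : Type} [Fintype X] [Fintype A] [DecidableEq X] [DecidableEq A]
    (q : A → X → ℝ) (h : ∀ x, ∑ a, q a x = 1) (x₀ : X) (a₀ : A) :
    ∑ f : X → A, (∏ x, q (f x) x) * (if f x₀ = a₀ then (1:ℝ) else 0) = q a₀ x₀ := by
  have key := Finset.prod_univ_sum (fun _ : X => (Finset.univ : Finset A))
    (fun x a => q a x * (if x = x₀ then (if a = a₀ then (1:ℝ) else 0) else 1))
  have hR : ∀ f : X → A, ∏ x, (q (f x) x * (if x = x₀ then (if f x = a₀ then (1:ℝ) else 0) else 1))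
      = (∏ x, q (f x) x) * (if f x₀ = a₀ then (1:ℝ) else 0) := by
    intro f
    rw [Finset.prod_mul_distrib]
    congr 1
    simp
  have hL : ∀ x : X, ∑ a, q a x * (if x = x₀ then (if a = a₀ then (1:ℝ) else 0) else 1)
      = (if x = x₀ then q a₀ x else 1) := by
    intro x
    by_cases hx : x = x₀ <;> simp [hx, mul_ite, h x]
  calc ∑ f : X → A, (∏ x, q (f x) x) * (if f x₀ = a₀ then (1:ℝ) else 0)
      = ∑ f ∈ Fintype.piFinset (fun _ : X => (Finset.univ : Finset A)),
          ∏ x, (q (f x) x * (if x = x₀ then (if f x = a₀ then (1:ℝ) else 0) else 1)) := by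
        rw [Fintype.piFinset_univ]
        exact Finset.sum_congr rfl fun f _ => (hR f).symm
    _ = ∏ x, ∑ a, q a x * (if x = x₀ then (if a = a₀ then (1:ℝ) else 0) else 1) := key.symm
    _ = ∏ x, (if x = x₀ then q a₀ x else 1) := by
        exact Finset.prod_congr rfl fun x _ => hL x
    _ = q a₀ x₀ := by simp

private lemma det_total {X A : Type} [Fintype X] [Fintype A] [DecidableEq X]
    (q : A → X → ℝ) (h : ∀ x, ∑ a, q a x = 1) :
    ∑ f : X → A, (∏ x, q (f x) x) = 1 := by
  have key := Finset.prod_univ_sum (fun _ : X => (Finset.univ : Finset A))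
    (fun x a => q a x)
  rw [Fintype.piFinset_univ] at key
  rw [← key]
  simp [h]


private lemma factor_sum {α β : Type} [Fintype α] [Fintype β] (c : ℝ) (F : α → ℝ) (G : β → ℝ) :
    ∑ f : α, ∑ g : β, c * F f * G g = c * (∑ f, F f) * (∑ g, G g) := by
  calc ∑ f : α, ∑ g : β, c * F f * G g
      = ∑ f : α, (c * F f) * ∑ g, G g :=
        Finset.sum_congr rfl fun f _ => (Finset.mul_sum _ _ _).symm
    _ = (∑ f : α, c * F f) * ∑ g, G g := (Finset.sum_mul _ _ _).symm
    _ = c * (∑ f, F f) * ∑ g, G g := by rw [← Finset.mul_sum]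

private lemma factor_sum4 {α β : Type} [Fintype α] [Fintype β] (c d : ℝ) (F : α → ℝ) (G : β → ℝ) :
    ∑ f : α, ∑ g : β, c * F f * G g * d = c * (∑ f, F f) * (∑ g, G g) * d := by
  calc ∑ f : α, ∑ g : β, c * F f * G g * d
      = ∑ f : α, (∑ g : β, c * F f * G g) * d :=
        Finset.sum_congr rfl fun f _ => (Finset.sum_mul _ _ _).symm
    _ = (∑ f : α, ∑ g : β, c * F f * G g) * d := (Finset.sum_mul _ _ _).symm
    _ = c * (∑ f, F f) * (∑ g, G g) * d := by rw [factor_sum]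

private lemma part_ii
    {A₁ A₂ A₃ X₁ X₂ X₃ : Type}
    [Fintype A₁] [Fintype A₂] [Fintype A₃] [Fintype X₁] [Fintype X₂] [Fintype X₃]
    (p : A₁ → A₂ → A₃ → X₁ → X₂ → X₃ → ℝ)
    (r : A₁ → A₂ → X₁ → X₂ → ℝ)
    (s : A₃ → A₁ → A₂ → X₁ → X₂ → X₃ → ℝ)
    (m : ℕ) (u : Fin m → ℝ)
    (r₁ : A₁ → X₁ → Fin m → ℝ) (r₂ : A₂ → X₂ → Fin m → ℝ)
    (hu0 : ∀ l, 0 ≤ u l) (hu1 : ∑ l, u l = 1)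
    (hr10 : ∀ a₁ x₁ l, 0 ≤ r₁ a₁ x₁ l) (hr11 : ∀ x₁ l, ∑ a₁, r₁ a₁ x₁ l = 1)
    (hr20 : ∀ a₂ x₂ l, 0 ≤ r₂ a₂ x₂ l) (hr21 : ∀ x₂ l, ∑ a₂, r₂ a₂ x₂ l = 1)
    (hr : ∀ a₁ a₂ x₁ x₂, r a₁ a₂ x₁ x₂ = ∑ l, u l * r₁ a₁ x₁ l * r₂ a₂ x₂ l)
    (hs0 : ∀ a₃ a₁ a₂ x₁ x₂ x₃, 0 ≤ s a₃ a₁ a₂ x₁ x₂ x₃)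
    (hs1 : ∀ a₁ a₂ x₁ x₂ x₃, ∑ a₃, s a₃ a₁ a₂ x₁ x₂ x₃ = 1)
    (hp : ∀ a₁ a₂ a₃ x₁ x₂ x₃,
        p a₁ a₂ a₃ x₁ x₂ x₃ = r a₁ a₂ x₁ x₂ * s a₃ a₁ a₂ x₁ x₂ x₃) :
    ∃ (n : ℕ) (w : Fin n → ℝ)
      (q₁ : A₁ → X₁ → Fin n → ℝ) (q₂ : A₂ → X₂ → Fin n → ℝ)
      (q₃ : A₃ → X₁ → X₂ → X₃ → Fin n → ℝ),
      (∀ l, 0 ≤ w l) ∧ (∑ l, w l = 1) ∧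
      (∀ a₁ x₁ l, 0 ≤ q₁ a₁ x₁ l) ∧ (∀ x₁ l, ∑ a₁, q₁ a₁ x₁ l = 1) ∧
      (∀ a₂ x₂ l, 0 ≤ q₂ a₂ x₂ l) ∧ (∀ x₂ l, ∑ a₂, q₂ a₂ x₂ l = 1) ∧
      (∀ a₃ x₁ x₂ x₃ l, 0 ≤ q₃ a₃ x₁ x₂ x₃ l) ∧
      (∀ x₁ x₂ x₃ l, ∑ a₃, q₃ a₃ x₁ x₂ x₃ l = 1) ∧
      (∀ a₁ a₂ a₃ x₁ x₂ x₃, p a₁ a₂ a₃ x₁ x₂ x₃ =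
        ∑ l, w l * q₁ a₁ x₁ l * q₂ a₂ x₂ l * q₃ a₃ x₁ x₂ x₃ l) := by
  classical
  set Λ := Fin m × (X₁ → A₁) × (X₂ → A₂) with hΛ
  -- weights and responses over Λ
  set W : Λ → ℝ := fun lfg =>
    u lfg.1 * (∏ x, r₁ (lfg.2.1 x) x lfg.1) * (∏ y, r₂ (lfg.2.2 y) y lfg.1) with hW
  set Q₁ : A₁ → X₁ → Λ → ℝ := fun a₁ x₁ lfg => if lfg.2.1 x₁ = a₁ then 1 else 0 with hQ₁
  set Q₂ : A₂ → X₂ → Λ → ℝ := fun a₂ x₂ lfg => if lfg.2.2 x₂ = a₂ then 1 else 0 with hQ₂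
  set Q₃ : A₃ → X₁ → X₂ → X₃ → Λ → ℝ :=
    fun a₃ x₁ x₂ x₃ lfg => s a₃ (lfg.2.1 x₁) (lfg.2.2 x₂) x₁ x₂ x₃ with hQ₃
  obtain e := Fintype.equivFin Λ
  refine ⟨Fintype.card Λ, fun l => W (e.symm l),
    fun a₁ x₁ l => Q₁ a₁ x₁ (e.symm l), fun a₂ x₂ l => Q₂ a₂ x₂ (e.symm l),
    fun a₃ x₁ x₂ x₃ l => Q₃ a₃ x₁ x₂ x₃ (e.symm l), ?_, ?_, ?_, ?_, ?_, ?_, ?_, ?_, ?_⟩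
  · intro l
    exact mul_nonneg (mul_nonneg (hu0 _) (Finset.prod_nonneg fun x _ => hr10 _ _ _))
      (Finset.prod_nonneg fun y _ => hr20 _ _ _)
  · rw [Equiv.sum_comp e.symm W]
    rw [Fintype.sum_prod_type]
    have : ∀ l : Fin m, ∑ fg : (X₁ → A₁) × (X₂ → A₂), W (l, fg) = u l := by
      intro l
      rw [Fintype.sum_prod_type]
      simp only [hW]
      rw [factor_sum (u l) (fun f : X₁ → A₁ => ∏ x, r₁ (f x) x l)
        (fun g : X₂ → A₂ => ∏ y, r₂ (g y) y l),
        det_total (fun a x => r₁ a x l) (fun x => hr11 x l),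
        det_total (fun a x => r₂ a x l) (fun x => hr21 x l)]
      ring
    rw [Finset.sum_congr rfl fun l _ => this l, hu1]
  · intro a₁ x₁ l; simp only [hQ₁]; positivity
  · intro x₁ l
    simp [hQ₁]
  · intro a₂ x₂ l; simp only [hQ₂]; positivity
  · intro x₂ l
    simp [hQ₂]
  · intro a₃ x₁ x₂ x₃ l; exact hs0 _ _ _ _ _ _
  · intro x₁ x₂ x₃ l; exact hs1 _ _ _ _ _
  · intro a₁ a₂ a₃ x₁ x₂ x₃
    rw [Equiv.sum_comp e.symm (fun lfg => W lfg * Q₁ a₁ x₁ lfg * Q₂ a₂ x₂ lfg *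
      Q₃ a₃ x₁ x₂ x₃ lfg)]
    rw [Fintype.sum_prod_type]
    have key : ∀ l : Fin m,
        (∑ fg : (X₁ → A₁) × (X₂ → A₂), W (l, fg) * Q₁ a₁ x₁ (l, fg) * Q₂ a₂ x₂ (l, fg) *
          Q₃ a₃ x₁ x₂ x₃ (l, fg))
        = u l * r₁ a₁ x₁ l * r₂ a₂ x₂ l * s a₃ a₁ a₂ x₁ x₂ x₃ := by
      intro l
      rw [Fintype.sum_prod_type]
      have step : ∀ (f : X₁ → A₁) (g : X₂ → A₂),
          W (l, f, g) * Q₁ a₁ x₁ (l, f, g) * Q₂ a₂ x₂ (l, f, g) * Q₃ a₃ x₁ x₂ x₃ (l, f, g)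
          = u l * ((∏ x, r₁ (f x) x l) * (if f x₁ = a₁ then (1:ℝ) else 0)) *
            ((∏ y, r₂ (g y) y l) * (if g x₂ = a₂ then (1:ℝ) else 0)) *
            s a₃ a₁ a₂ x₁ x₂ x₃ := by
        intro f g
        simp only [hW, hQ₁, hQ₂, hQ₃]
        by_cases h1 : f x₁ = a₁
        · by_cases h2 : g x₂ = a₂
          · subst h1; subst h2; simp only [if_pos rfl]; ring
          · simp [h1, h2]
        · simp [h1]
      calc ∑ f : X₁ → A₁, ∑ g : X₂ → A₂,
            W (l, f, g) * Q₁ a₁ x₁ (l, f, g) * Q₂ a₂ x₂ (l, f, g) * Q₃ a₃ x₁ x₂ x₃ (l, f, g)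
          = ∑ f : X₁ → A₁, ∑ g : X₂ → A₂,
            u l * ((∏ x, r₁ (f x) x l) * (if f x₁ = a₁ then (1:ℝ) else 0)) *
            ((∏ y, r₂ (g y) y l) * (if g x₂ = a₂ then (1:ℝ) else 0)) *
            s a₃ a₁ a₂ x₁ x₂ x₃ := by
            exact Finset.sum_congr rfl fun f _ => Finset.sum_congr rfl fun g _ => step f g
        _ = u l * (∑ f : X₁ → A₁, (∏ x, r₁ (f x) x l) * (if f x₁ = a₁ then (1:ℝ) else 0)) *
            (∑ g : X₂ → A₂, (∏ y, r₂ (g y) y l) * (if g x₂ = a₂ then (1:ℝ) else 0)) *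
            s a₃ a₁ a₂ x₁ x₂ x₃ :=
            factor_sum4 (u l) (s a₃ a₁ a₂ x₁ x₂ x₃)
              (fun f : X₁ → A₁ => (∏ x, r₁ (f x) x l) * (if f x₁ = a₁ then (1:ℝ) else 0))
              (fun g : X₂ → A₂ => (∏ y, r₂ (g y) y l) * (if g x₂ = a₂ then (1:ℝ) else 0))
        _ = u l * r₁ a₁ x₁ l * r₂ a₂ x₂ l * s a₃ a₁ a₂ x₁ x₂ x₃ := by
            rw [det_sum (fun a x => r₁ a x l) (fun x => hr11 x l) x₁ a₁,
              det_sum (fun a x => r₂ a x l) (fun x => hr21 x l) x₂ a₂]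
    rw [Finset.sum_congr rfl fun l _ => key l, hp, hr, Finset.sum_mul]



/-- (i) every distribution compatible with the star class
{(1),(2),(1,2,3)} is compatible with {(1,3),(2,3),(1,2,3)}; (ii) conversely, every
nonsignaling distribution of the form p = r(a₁,a₂|x₁,x₂)·s(a₃|a₁,a₂,x₁,x₂,x₃) with r
a bipartite LHV distribution and s an arbitrary conditional distribution is
compatible with the star class {(1),(2),(1,2,3)}. -/
theorem star_class_collapse
    {A₁ A₂ A₃ X₁ X₂ X₃ : Type}
    [Fintype A₁] [Fintype A₂] [Fintype A₃] [Fintype X₁] [Fintype X₂] [Fintype X₃]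
    [Nonempty A₁] [Nonempty A₂] [Nonempty A₃] :
    -- (i) star class {(1),(2),(1,2,3)} is contained in {(1,3),(2,3),(1,2,3)}
    (∀ (p : A₁ → A₂ → A₃ → X₁ → X₂ → X₃ → ℝ) (n : ℕ) (w : Fin n → ℝ)
       (q₁ : A₁ → X₁ → Fin n → ℝ) (q₂ : A₂ → X₂ → Fin n → ℝ)
       (q₃ : A₃ → X₁ → X₂ → X₃ → Fin n → ℝ),
      (∀ l, 0 ≤ w l) → (∑ l, w l = 1) →
      (∀ a₁ x₁ l, 0 ≤ q₁ a₁ x₁ l) → (∀ x₁ l, ∑ a₁, q₁ a₁ x₁ l = 1) →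
      (∀ a₂ x₂ l, 0 ≤ q₂ a₂ x₂ l) → (∀ x₂ l, ∑ a₂, q₂ a₂ x₂ l = 1) →
      (∀ a₃ x₁ x₂ x₃ l, 0 ≤ q₃ a₃ x₁ x₂ x₃ l) →
      (∀ x₁ x₂ x₃ l, ∑ a₃, q₃ a₃ x₁ x₂ x₃ l = 1) →
      (∀ a₁ a₂ a₃ x₁ x₂ x₃, p a₁ a₂ a₃ x₁ x₂ x₃ =
        ∑ l, w l * q₁ a₁ x₁ l * q₂ a₂ x₂ l * q₃ a₃ x₁ x₂ x₃ l) →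
      ∃ (m : ℕ) (w' : Fin m → ℝ)
        (r₁ : A₁ → X₁ → X₃ → Fin m → ℝ) (r₂ : A₂ → X₂ → X₃ → Fin m → ℝ)
        (r₃ : A₃ → X₁ → X₂ → X₃ → Fin m → ℝ),
        (∀ l, 0 ≤ w' l) ∧ (∑ l, w' l = 1) ∧
        (∀ a₁ x₁ x₃ l, 0 ≤ r₁ a₁ x₁ x₃ l) ∧ (∀ x₁ x₃ l, ∑ a₁, r₁ a₁ x₁ x₃ l = 1) ∧
        (∀ a₂ x₂ x₃ l, 0 ≤ r₂ a₂ x₂ x₃ l) ∧ (∀ x₂ x₃ l, ∑ a₂, r₂ a₂ x₂ x₃ l = 1) ∧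
        (∀ a₃ x₁ x₂ x₃ l, 0 ≤ r₃ a₃ x₁ x₂ x₃ l) ∧
        (∀ x₁ x₂ x₃ l, ∑ a₃, r₃ a₃ x₁ x₂ x₃ l = 1) ∧
        (∀ a₁ a₂ a₃ x₁ x₂ x₃, p a₁ a₂ a₃ x₁ x₂ x₃ =
          ∑ l, w' l * r₁ a₁ x₁ x₃ l * r₂ a₂ x₂ x₃ l * r₃ a₃ x₁ x₂ x₃ l))
    ∧
    -- (ii) nonsignaling p = r·s with r bipartite LHV is in the star class
    (∀ (p : A₁ → A₂ → A₃ → X₁ → X₂ → X₃ → ℝ)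
       (r : A₁ → A₂ → X₁ → X₂ → ℝ)
       (s : A₃ → A₁ → A₂ → X₁ → X₂ → X₃ → ℝ)
       (m : ℕ) (u : Fin m → ℝ)
       (r₁ : A₁ → X₁ → Fin m → ℝ) (r₂ : A₂ → X₂ → Fin m → ℝ),
      -- p nonsignaling
      (∀ a₁ a₂ a₃ x₁ x₂ x₃, 0 ≤ p a₁ a₂ a₃ x₁ x₂ x₃) →
      (∀ x₁ x₂ x₃, ∑ a₁, ∑ a₂, ∑ a₃, p a₁ a₂ a₃ x₁ x₂ x₃ = 1) →
      (∀ a₂ a₃ x₂ x₃ x₁ x₁', ∑ a₁, p a₁ a₂ a₃ x₁ x₂ x₃ = ∑ a₁, p a₁ a₂ a₃ x₁' x₂ x₃) →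
      (∀ a₁ a₃ x₁ x₃ x₂ x₂', ∑ a₂, p a₁ a₂ a₃ x₁ x₂ x₃ = ∑ a₂, p a₁ a₂ a₃ x₁ x₂' x₃) →
      (∀ a₁ a₂ x₁ x₂ x₃ x₃', ∑ a₃, p a₁ a₂ a₃ x₁ x₂ x₃ = ∑ a₃, p a₁ a₂ a₃ x₁ x₂ x₃') →
      -- r is a bipartite LHV distribution
      (∀ l, 0 ≤ u l) → (∑ l, u l = 1) →
      (∀ a₁ x₁ l, 0 ≤ r₁ a₁ x₁ l) → (∀ x₁ l, ∑ a₁, r₁ a₁ x₁ l = 1) →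
      (∀ a₂ x₂ l, 0 ≤ r₂ a₂ x₂ l) → (∀ x₂ l, ∑ a₂, r₂ a₂ x₂ l = 1) →
      (∀ a₁ a₂ x₁ x₂, r a₁ a₂ x₁ x₂ = ∑ l, u l * r₁ a₁ x₁ l * r₂ a₂ x₂ l) →
      -- s is an arbitrary conditional distribution for a₃
      (∀ a₃ a₁ a₂ x₁ x₂ x₃, 0 ≤ s a₃ a₁ a₂ x₁ x₂ x₃) →
      (∀ a₁ a₂ x₁ x₂ x₃, ∑ a₃, s a₃ a₁ a₂ x₁ x₂ x₃ = 1) →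
      -- the product form
      (∀ a₁ a₂ a₃ x₁ x₂ x₃,
        p a₁ a₂ a₃ x₁ x₂ x₃ = r a₁ a₂ x₁ x₂ * s a₃ a₁ a₂ x₁ x₂ x₃) →
      ∃ (n : ℕ) (w : Fin n → ℝ)
        (q₁ : A₁ → X₁ → Fin n → ℝ) (q₂ : A₂ → X₂ → Fin n → ℝ)
        (q₃ : A₃ → X₁ → X₂ → X₃ → Fin n → ℝ),
        (∀ l, 0 ≤ w l) ∧ (∑ l, w l = 1) ∧
        (∀ a₁ x₁ l, 0 ≤ q₁ a₁ x₁ l) ∧ (∀ x₁ l, ∑ a₁, q₁ a₁ x₁ l = 1) ∧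
        (∀ a₂ x₂ l, 0 ≤ q₂ a₂ x₂ l) ∧ (∀ x₂ l, ∑ a₂, q₂ a₂ x₂ l = 1) ∧
        (∀ a₃ x₁ x₂ x₃ l, 0 ≤ q₃ a₃ x₁ x₂ x₃ l) ∧
        (∀ x₁ x₂ x₃ l, ∑ a₃, q₃ a₃ x₁ x₂ x₃ l = 1) ∧
        (∀ a₁ a₂ a₃ x₁ x₂ x₃, p a₁ a₂ a₃ x₁ x₂ x₃ =
          ∑ l, w l * q₁ a₁ x₁ l * q₂ a₂ x₂ l * q₃ a₃ x₁ x₂ x₃ l)) := by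
  constructor
  · intro p n w q₁ q₂ q₃ hw0 hw1 hq10 hq11 hq20 hq21 hq30 hq31 hp
    exact ⟨n, w, fun a₁ x₁ _ l => q₁ a₁ x₁ l, fun a₂ x₂ _ l => q₂ a₂ x₂ l, q₃,
      hw0, hw1, fun a₁ x₁ _ l => hq10 a₁ x₁ l, fun x₁ _ l => hq11 x₁ l,
      fun a₂ x₂ _ l => hq20 a₂ x₂ l, fun x₂ _ l => hq21 x₂ l, hq30, hq31, hp⟩
  · intro p r s m u r₁ r₂ _ _ _ _ _ hu0 hu1 hr10 hr11 hr20 hr21 hr hs0 hs1 hp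
    exact part_ii p r s m u r₁ r₂ hu0 hu1 hr10 hr11 hr20 hr21 hr hs0 hs1 hp
end
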